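/- Let e ≥ 3 and suppose d₂, d₃, …, d_e is a sequence of matrices over a graded polynomial ring with linear entries such that consecutive products vanish as symmetric tensors, and such that (in the case e = 2m+1 odd) d_{e+1−i} = ± d_iᵗ for 2 ≤ i ≤ m with d_{m+1}ᵗ = (−1)^m d_{m+1}, or (in the case e = 2m even) the middle factor φ satisfies φᵗ = (−1)^m φ and d_{e+1−i} = ± d_iᵗ for 2 ≤ i ≤ m. Then the wedge product D_{e−1} = d₂ ∧ d₃ ∧ ⋯ (with entries in ⋀^{e−2} of the space of linear forms) is skew-symmetric: D_{e−1}ᵗ = −D_{e−1}. -/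

import Mathlib

/-!
Peel off the outermost pair of factors. If `G` is the wedge product of the `t` inner matrices,
the entries of the whole product are sums of `ι u * G_ab * ι w`, and since `G_ab ∈ ⋀^t V`,
`ι u * G_ab * ι w = -(ι w * G_ab * ι u)`. Hence when the outer factors are signed transposes
of each other and `G` is `σ`-symmetric, the whole product is `(-σ)`-symmetric. The innermost
product is `d_{m+1}` alone, `(-1)^m`-symmetric, for `e = 2m+1`, and `d_m ∧ φ d_mᵗ`,
`-(-1)^m`-symmetric, for `e = 2m`; counting the sign flips gives `-1` in both cases.
-/

open ExteriorAlgebra TensorProduct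

/-- The wedge composition `d₂ ∧ d₃ ∧ ⋯ ∧ d_{j+1}` of a chain of matrices with entries
in `V` (here `c i` is the matrix `d_{i+1}`, of size `n i × n (i+1)`), with entries in
the exterior algebra of `V`. -/
noncomputable def wedgeChain (k : Type*) [Field k] {V : Type*} [AddCommGroup V]
    [Module k V] (n : ℕ → ℕ) (c : ∀ i : ℕ, Fin (n i) → Fin (n (i + 1)) → V) :
    (j : ℕ) → Fin (n 1) → Fin (n (j + 1)) → ExteriorAlgebra k V
  | 0, a, b => if (a : ℕ) = (b : ℕ) then 1 else 0
  | j + 1, a, b => ∑ l, wedgeChain k n c j a l * ExteriorAlgebra.ι k (c (j + 1) l b)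

namespace ExteriorAlgebra

variable {R : Type*} [CommRing R] {V : Type*} [AddCommGroup V] [Module R V]

theorem ι_mul_ι_eq_neg (u v : V) : ι R u * ι R v = -(ι R v * ι R u) :=
  eq_neg_of_add_eq_zero_left (ι_add_mul_swap u v)

theorem ι_mul_eq_neg_one_pow_smul {p : ℕ} {x : ExteriorAlgebra R V} (hx : x ∈ ⋀[R]^p V)
    (v : V) : ι R v * x = (-1 : ℤ) ^ p • (x * ι R v) := by
  induction hx using Submodule.pow_induction_on_left' with
  | algebraMap r => simp [Algebra.commutes]
  | add x y i _ _ hx hy => rw [mul_add, hx, hy, add_mul, smul_add]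
  | mem_mul m hm i x _ ih =>
    obtain ⟨w, rfl⟩ := hm
    rw [← mul_assoc, ι_mul_ι_eq_neg, neg_mul, mul_assoc, ih, mul_smul_comm, ← mul_assoc,
      pow_succ, mul_neg_one, neg_smul]

theorem ι_mul_mul_ι_eq_neg {p : ℕ} {x : ExteriorAlgebra R V} (hx : x ∈ ⋀[R]^p V) (u w : V) :
    ι R u * x * ι R w = -(ι R w * x * ι R u) := by
  rw [ι_mul_eq_neg_one_pow_smul hx, smul_mul_assoc, mul_assoc, ι_mul_ι_eq_neg, mul_neg,
    ι_mul_eq_neg_one_pow_smul hx w, smul_mul_assoc, mul_assoc, smul_neg]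

theorem sum_sum_smul_ι_mul_ι_swap {I : Type*} [Fintype I] (φ : Matrix I I R) (τ : ℤ)
    (hφ : ∀ a b, φ b a = τ * φ a b) (u w : I → V) :
    ∑ a, ∑ b, φ a b • (ι R (w a) * ι R (u b))
      = -τ • ∑ a, ∑ b, φ a b • (ι R (u a) * ι R (w b)) := by
  rw [Finset.sum_comm, Finset.smul_sum]
  refine Finset.sum_congr rfl fun a _ => ?_
  rw [Finset.smul_sum]
  refine Finset.sum_congr rfl fun b _ => ?_
  rw [hφ, ι_mul_ι_eq_neg, mul_smul, Int.cast_smul_eq_zsmul, smul_neg, neg_smul, smul_neg]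

end ExteriorAlgebra

section WedgeChainFrom

open Finset

variable (R : Type*) [CommRing R] {V : Type*} [AddCommGroup V] [Module R V]
  (n : ℕ → ℕ) (c : ∀ i : ℕ, Fin (n i) → Fin (n (i + 1)) → V)

noncomputable def paddedEntry (i x y : ℕ) : V :=
  if h : x < n i ∧ y < n (i + 1) then c i ⟨x, h.1⟩ ⟨y, h.2⟩ else 0

/-- The entries of `c (s + 1) ∧ ⋯ ∧ c (s + t)`, indexed by `ℕ` and zero outside the
matrix. -/
noncomputable def wedgeChainFrom (s : ℕ) : ℕ → ℕ → ℕ → ExteriorAlgebra R V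
  | 0, x, y => if x = y then 1 else 0
  | t + 1, x, y => ∑ l ∈ range (n (s + t + 1)),
      wedgeChainFrom s t x l * ι R (paddedEntry n c (s + t + 1) l y)

variable {R n c}

theorem paddedEntry_of_le_left {i x : ℕ} (h : n i ≤ x) (y : ℕ) : paddedEntry n c i x y = 0 :=
  dif_neg (by omega)

theorem paddedEntry_of_le_right {i y : ℕ} (x : ℕ) (h : n (i + 1) ≤ y) :
    paddedEntry n c i x y = 0 :=
  dif_neg (by omega)

theorem wedgeChainFrom_zero (s x y : ℕ) :
    wedgeChainFrom R n c s 0 x y = if x = y then 1 else 0 := rfl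

theorem wedgeChainFrom_succ (s t x y : ℕ) :
    wedgeChainFrom R n c s (t + 1) x y = ∑ l ∈ range (n (s + t + 1)),
      wedgeChainFrom R n c s t x l * ι R (paddedEntry n c (s + t + 1) l y) := rfl

theorem wedgeChainFrom_one (s x y : ℕ) :
    wedgeChainFrom R n c s 1 x y = ι R (paddedEntry n c (s + 1) x y) := by
  simp only [wedgeChainFrom_succ, wedgeChainFrom_zero, ite_mul, one_mul, zero_mul, sum_ite_eq,
    mem_range]
  split_ifs with hx
  · rfl
  · rw [paddedEntry_of_le_left (not_lt.mp hx), map_zero]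

theorem wedgeChainFrom_mem_exteriorPower (s t x y : ℕ) :
    wedgeChainFrom R n c s t x y ∈ ⋀[R]^t V := by
  induction t generalizing y with
  | zero =>
    rw [wedgeChainFrom_zero]
    split_ifs
    · exact SetLike.one_mem_graded (fun i => ⋀[R]^i V)
    · exact zero_mem _
  | succ t ih =>
    rw [wedgeChainFrom_succ, exteriorPower, pow_succ]
    exact sum_mem fun l _ => Submodule.mul_mem_mul (ih l) (LinearMap.mem_range_self _ _)

theorem wedgeChainFrom_succ_left (s t x y : ℕ) :
    wedgeChainFrom R n c s (t + 1) x y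
      = ∑ l ∈ range (n (s + 2)),
          ι R (paddedEntry n c (s + 1) x l) * wedgeChainFrom R n c (s + 1) t l y := by
  induction t generalizing y with
  | zero =>
    rw [zero_add, wedgeChainFrom_one]
    simp only [wedgeChainFrom_zero, mul_ite, mul_one, mul_zero, sum_ite_eq', mem_range]
    split_ifs with hy
    · rfl
    · rw [paddedEntry_of_le_right x (not_lt.mp hy), map_zero]
  | succ t ih =>
    simp only [wedgeChainFrom_succ (t := t + 1), ih, sum_mul, wedgeChainFrom_succ (s := s + 1),
      mul_sum, mul_assoc, show s + 1 + t + 1 = s + (t + 1) + 1 by omega]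
    exact sum_comm

theorem wedgeChainFrom_add_two (s t x y : ℕ) :
    wedgeChainFrom R n c s (t + 2) x y
      = ∑ b ∈ range (n (s + t + 2)), ∑ a ∈ range (n (s + 2)),
          ι R (paddedEntry n c (s + 1) x a) * wedgeChainFrom R n c (s + 1) t a b
            * ι R (paddedEntry n c (s + t + 2) b y) := by
  rw [wedgeChainFrom_succ]
  simp only [wedgeChainFrom_succ_left, sum_mul]
  rfl

variable (n c) in
def IsSignedTranspose (δ : ℤ) (i j : ℕ) : Prop :=
  n (i + 1) = n j ∧ ∀ x y, paddedEntry n c j x y = δ • paddedEntry n c i y x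

theorem IsSignedTranspose.paddedEntry_left_eq {δ : ℤ} {i j : ℕ}
    (h : IsSignedTranspose n c δ i j)
    (hδ : δ * δ = 1) (x y : ℕ) : paddedEntry n c i x y = δ • paddedEntry n c j y x := by
  rw [h.2, smul_smul, hδ, one_smul]

theorem wedgeChainFrom_add_two_swap {s t : ℕ} {σ δ : ℤ}
    (hinner : ∀ x y,
      wedgeChainFrom R n c (s + 1) t x y = σ • wedgeChainFrom R n c (s + 1) t y x)
    (hδ : δ * δ = 1) (houter : IsSignedTranspose n c δ (s + 1) (s + t + 2)) (x y : ℕ) :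
    wedgeChainFrom R n c s (t + 2) x y = -σ • wedgeChainFrom R n c s (t + 2) y x := by
  have hterm : ∀ a b, ι R (paddedEntry n c (s + 1) x a) * wedgeChainFrom R n c (s + 1) t a b
        * ι R (paddedEntry n c (s + t + 2) b y)
      = -σ • (ι R (paddedEntry n c (s + 1) y b) * wedgeChainFrom R n c (s + 1) t b a
        * ι R (paddedEntry n c (s + t + 2) a x)) := by
    intro a b
    rw [houter.paddedEntry_left_eq hδ x a, houter.2 b y, hinner a b, map_zsmul, map_zsmul]
    simp only [smul_mul_assoc, mul_smul_comm, smul_smul]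
    rw [ι_mul_mul_ι_eq_neg (wedgeChainFrom_mem_exteriorPower _ _ _ _)
      (paddedEntry n c (s + t + 2) a x), smul_neg, ← neg_smul,
      show δ * (σ * δ) = σ * (δ * δ) by ring, hδ, mul_one]
  rw [wedgeChainFrom_add_two, wedgeChainFrom_add_two, ← houter.1]
  simp only [hterm, ← smul_sum]
  rw [sum_comm]

/-- `i` and `2 * s + 2 * p + t + 1 - i` are mirror positions in
`c (s + 1), …, c (s + t + 2 * p)`. -/
theorem wedgeChainFrom_swap_of_palindrome {t : ℕ} {σ : ℤ} {δ : ℕ → ℤ}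
    (hδ : ∀ i, δ i * δ i = 1) (p : ℕ) {s : ℕ}
    (hinner : ∀ x y,
      wedgeChainFrom R n c (s + p) t x y = σ • wedgeChainFrom R n c (s + p) t y x)
    (houter : ∀ i, s < i → i ≤ s + p →
      IsSignedTranspose n c (δ i) i (2 * s + 2 * p + t + 1 - i)) (x y : ℕ) :
    wedgeChainFrom R n c s (t + 2 * p) x y
      = ((-1) ^ p * σ) • wedgeChainFrom R n c s (t + 2 * p) y x := by
  induction p generalizing s x y with
  | zero => simpa using hinner x y
  | succ p ih =>
    have hmid : ∀ x y, wedgeChainFrom R n c (s + 1) (t + 2 * p) x y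
        = ((-1) ^ p * σ) • wedgeChainFrom R n c (s + 1) (t + 2 * p) y x := by
      refine ih (s := s + 1) (by simpa only [add_right_comm, add_assoc] using hinner) ?_
      intro i hi hi'
      convert houter i (by omega) (by omega) using 2
      omega
    have hlast : IsSignedTranspose n c (δ (s + 1)) (s + 1) (s + (t + 2 * p) + 2) := by
      convert houter (s + 1) (by omega) (by omega) using 2
      omega
    rw [show t + 2 * (p + 1) = t + 2 * p + 2 by ring,
      wedgeChainFrom_add_two_swap hmid (hδ _) hlast]
    congr 1
    ring

theorem wedgeChainFrom_one_swap {s : ℕ} {δ : ℤ} (h : IsSignedTranspose n c δ (s + 1) (s + 1))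
    (x y : ℕ) : wedgeChainFrom R n c s 1 x y = δ • wedgeChainFrom R n c s 1 y x := by
  rw [wedgeChainFrom_one, wedgeChainFrom_one, h.2, map_zsmul]

theorem wedgeChainFrom_two_swap {s : ℕ} (φ : Matrix (Fin (n (s + 2))) (Fin (n (s + 2))) R)
    {τ δ : ℤ} (hφ : ∀ a b, φ b a = τ * φ a b)
    (hmid : ∀ (a : Fin (n (s + 2))) y,
      paddedEntry n c (s + 2) a y = δ • ∑ l, φ a l • paddedEntry n c (s + 1) y l)
    (x y : ℕ) : wedgeChainFrom R n c s 2 x y = -τ • wedgeChainFrom R n c s 2 y x := by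
  have hexpand : ∀ x y, wedgeChainFrom R n c s 2 x y = δ • ∑ a, ∑ l,
      φ a l • (ι R (paddedEntry n c (s + 1) x a) * ι R (paddedEntry n c (s + 1) y l)) := by
    intro x y
    rw [wedgeChainFrom_succ_left, ← Fin.sum_univ_eq_sum_range, smul_sum]
    refine sum_congr rfl fun a _ => ?_
    rw [wedgeChainFrom_one, hmid, map_zsmul, map_sum, mul_smul_comm, mul_sum]
    simp only [map_smul, mul_smul_comm]
  rw [hexpand, hexpand, sum_sum_smul_ι_mul_ι_swap φ τ hφ, smul_comm]

theorem isSignedTranspose_reflect {e i : ℕ} {δ : ℤ} (hn : ∀ i, i ≤ e → n i = n (e - i))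
    (hi : i + 1 ≤ e)
    (h : ∀ (h1 : n (e - 1 - i) = n (i + 1)) (h2 : n (e - 1 - i + 1) = n i) a b,
      c (e - 1 - i) a b = δ • c i (Fin.cast h2 b) (Fin.cast h1 a)) :
    IsSignedTranspose n c δ i (e - 1 - i) := by
  have h1 : n (e - 1 - i) = n (i + 1) := by
    rw [hn (i + 1) hi, show e - (i + 1) = e - 1 - i by omega]
  have h2 : n (e - 1 - i + 1) = n i := by
    rw [hn i (by omega), show e - 1 - i + 1 = e - i by omega]
  refine ⟨h1.symm, fun x y => ?_⟩
  by_cases hxy : x < n (e - 1 - i) ∧ y < n (e - 1 - i + 1)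
  · rw [paddedEntry, dif_pos hxy, h h1 h2, paddedEntry, dif_pos ⟨by omega, by omega⟩]
    rfl
  · rw [paddedEntry, dif_neg hxy, paddedEntry, dif_neg (by omega), smul_zero]

theorem paddedEntry_eq_smul_sum {m : ℕ} (φ : Matrix (Fin (n m)) (Fin (n m)) R) {δ : ℤ}
    (h : n (m + 1) = n (m - 1)) (h' : n m = n (m - 1 + 1))
    (hmid : ∀ a b, c m a b = δ • ∑ l, φ a l • c (m - 1) (Fin.cast h b) (Fin.cast h' l))
    (a : Fin (n m)) (y : ℕ) :
    paddedEntry n c m a y = δ • ∑ l, φ a l • paddedEntry n c (m - 1) y l := by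
  by_cases hy : y < n (m + 1)
  · rw [paddedEntry, dif_pos ⟨a.isLt, hy⟩, hmid]
    congr 2 with l
    rw [paddedEntry, dif_pos ⟨by omega, by omega⟩]
    rfl
  · rw [paddedEntry_of_le_right _ (not_lt.mp hy)]
    simp only [paddedEntry_of_le_left (show n (m - 1) ≤ y by omega), smul_zero, sum_const_zero]

theorem wedgeChainFrom_skew_of_odd {e m : ℕ} (he : e = 2 * m + 1) (hm : 1 ≤ m)
    {ε : ℕ → ℤ} (hε : ∀ i, ε i * ε i = 1)
    (hdual : ∀ i, 1 ≤ i → i ≤ m → IsSignedTranspose n c (ε i) i (e - 1 - i))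
    (hεm : ε m = (-1) ^ m) (x y : ℕ) :
    wedgeChainFrom R n c 0 (e - 2) x y = -wedgeChainFrom R n c 0 (e - 2) y x := by
  obtain ⟨p, rfl⟩ : ∃ p, m = p + 1 := ⟨m - 1, by omega⟩
  have hmid : IsSignedTranspose n c (ε (p + 1)) (p + 1) (p + 1) := by
    convert hdual (p + 1) (by omega) le_rfl using 2
    omega
  have hchain := wedgeChainFrom_swap_of_palindrome (R := R) hε p (s := 0)
    (by simpa only [zero_add] using wedgeChainFrom_one_swap hmid)
    (fun i hi hi' => by convert hdual i (by omega) (by omega) using 2; omega) x y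
  rw [show e - 2 = 1 + 2 * p by omega, hchain, hεm, ← pow_add,
    Odd.neg_one_pow ⟨p, by ring⟩, neg_one_smul]

theorem wedgeChainFrom_skew_of_even {e m : ℕ} (he : e = 2 * m) (hm : 2 ≤ m) {ε : ℕ → ℤ}
    (hε : ∀ i, ε i * ε i = 1)
    (hdual : ∀ i, 1 ≤ i → i ≤ m - 2 → IsSignedTranspose n c (ε i) i (e - 1 - i))
    (φ : Matrix (Fin (n m)) (Fin (n m)) R) (hφ : ∀ a b, φ b a = (-1) ^ m * φ a b)
    (hmid : ∀ (a : Fin (n m)) y,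
      paddedEntry n c m a y = ε m • ∑ l, φ a l • paddedEntry n c (m - 1) y l)
    (x y : ℕ) :
    wedgeChainFrom R n c 0 (e - 2) x y = -wedgeChainFrom R n c 0 (e - 2) y x := by
  obtain ⟨p, rfl⟩ : ∃ p, m = p + 2 := ⟨m - 2, by omega⟩
  have hchain := wedgeChainFrom_swap_of_palindrome (R := R) hε p (s := 0)
    (by simpa only [zero_add] using
      wedgeChainFrom_two_swap φ (τ := (-1) ^ (p + 2)) (by simpa using hφ) hmid)
    (fun i hi hi' => by convert hdual i (by omega) (by omega) using 2; omega) x y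
  rw [show e - 2 = 2 + 2 * p by omega, hchain, mul_neg, ← pow_add,
    Even.neg_one_pow ⟨p + 1, by ring⟩, neg_smul, one_smul]

end WedgeChainFrom

theorem wedgeChain_eq_wedgeChainFrom (k : Type*) [Field k] {V : Type*} [AddCommGroup V]
    [Module k V] (n : ℕ → ℕ) (c : ∀ i : ℕ, Fin (n i) → Fin (n (i + 1)) → V) (j : ℕ)
    (a : Fin (n 1)) (b : Fin (n (j + 1))) :
    wedgeChain k n c j a b = wedgeChainFrom k n c 0 j a b := by
  induction j with
  | zero => rfl
  | succ j ih =>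
    rw [wedgeChain, wedgeChainFrom_succ, zero_add, ← Fin.sum_univ_eq_sum_range]
    refine Finset.sum_congr rfl fun l _ => ?_
    rw [ih, paddedEntry, dif_pos ⟨l.isLt, b.isLt⟩]

theorem highest_syzygy_matrix_skewSymmetric (k : Type*) [Field k] (V : Type*)
    [AddCommGroup V] [Module k V] (e m : ℕ) (he : 3 ≤ e) (n : ℕ → ℕ)
    (c : ∀ i : ℕ, Fin (n i) → Fin (n (i + 1)) → V)
    (hn : ∀ i, i ≤ e → n i = n (e - i))
    (ε : ℕ → ℤ) (hε : ∀ i, ε i = 1 ∨ ε i = -1)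
    (hcase :
      (∃ _ : e = 2 * m + 1,
        (∀ i, 1 ≤ i → i ≤ e - 2 →
          ∀ (h1 : n (e - 1 - i) = n (i + 1)) (h2 : n (e - 1 - i + 1) = n i) a b,
            c (e - 1 - i) a b = ε i • c i (Fin.cast h2 b) (Fin.cast h1 a)) ∧
          ε m = (-1 : ℤ) ^ m) ∨
      (∃ _ : e = 2 * m, ∃ φ : Matrix (Fin (n m)) (Fin (n m)) k,
        (∀ a b, φ b a = (-1 : k) ^ m * φ a b) ∧ IsUnit φ.det ∧
        (∀ i, 1 ≤ i → i ≤ m - 2 →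
          ∀ (h1 : n (e - 1 - i) = n (i + 1)) (h2 : n (e - 1 - i + 1) = n i) a b,
            c (e - 1 - i) a b = ε i • c i (Fin.cast h2 b) (Fin.cast h1 a)) ∧
        (∀ (h : n (m + 1) = n (m - 1)) (h' : n m = n (m - 1 + 1))
            (a : Fin (n m)) (b : Fin (n (m + 1))),
          c m a b = ε m • ∑ l, φ a l • c (m - 1) (Fin.cast h b) (Fin.cast h' l))))
    (hsq : n (e - 2 + 1) = n 1) :
    ∀ a b, wedgeChain k n c (e - 2) a b
      = - wedgeChain k n c (e - 2) (Fin.cast hsq b) (Fin.cast hsq.symm a) := by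
  suffices hskew : ∀ x y,
      wedgeChainFrom k n c 0 (e - 2) x y = -wedgeChainFrom k n c 0 (e - 2) y x by
    intro a b
    rw [wedgeChain_eq_wedgeChainFrom, wedgeChain_eq_wedgeChainFrom, hskew]
    rfl
  have hsign : ∀ i, ε i * ε i = 1 := fun i => Int.isUnit_mul_self (Int.isUnit_iff.mpr (hε i))
  rcases hcase with ⟨he', hdual, hεm⟩ | ⟨he', φ, hφ, -, hdual, hmid⟩
  · exact wedgeChainFrom_skew_of_odd he' (by omega) hsign
      (fun i hi hi' => isSignedTranspose_reflect hn (by omega) (hdual i hi (by omega))) hεm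
  · have h : n (m + 1) = n (m - 1) := by rw [hn (m + 1) (by omega)]; congr 1; omega
    have h' : n m = n (m - 1 + 1) := by rw [Nat.sub_add_cancel (by omega : 1 ≤ m)]
    exact wedgeChainFrom_skew_of_even he' (by omega) hsign
      (fun i hi hi' => isSignedTranspose_reflect hn (by omega) (hdual i hi hi')) φ hφ
      (paddedEntry_eq_smul_sum φ h h' (hmid h h'))
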